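/- Let K ≥ 2 and 0 ≤ δ < 1, and suppose the erasure events of the K users are i.i.d. with per-user erasure probability δ, so that δ_A = δ^{|A|} and φ_{F,T} = δ^{|F|}(1-δ)^{|T|}. Define μ recursively by μ_{{k}} = m for all k (some m > 0), and μ_J = Σ_{I : k*∈I⊊J} [δ^{K-j+1}(1-δ)^{j-i} / (1 - δ^{K-j+1})] μ_I for |J| = j ≥ 2 with i = |I| and k* = min J. Then for every k and every W with k ∈ W ⊆ {k,…,K} and |W| = w: Σ_{I : k∈I⊆W} μ_I = (1 - δ^K) m / (1 - δ^{K-w+1}). -/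

import Mathlib

/-!
By induction on `|J|`, the recursion forces `μ J` to depend only on `|J|`; write `f i` for its
value on sets of size `i + 1`. With the binomial transform `B_x f n = ∑ C(n,i) x^(n-i) f i`, the
left-hand side is `S = B_1 f` at `n = |W| - 1`, and transforms compose additively:
`B_x ∘ B_y = B_(x+y)`. Hence `f = B_(-1) S` and `B_(1-δ) f = B_(-δ) S`, so the recursion
`f n = δ^(K-n) B_(1-δ) f n` says exactly that `B_(-1) h n = 0` for `1 ≤ n < K`, where
`h v = (1 - δ^(K-v)) S v`. Inverting, `h = B_1 (B_(-1) h)` is constant on `n < K`, equal to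
`h 0 = (1 - δ^K) m`.
-/

open Finset

section BinomialTransform

variable {R : Type*} [CommRing R]

def binomialTransform (x : R) (f : ℕ → R) (n : ℕ) : R :=
  ∑ i ∈ range (n + 1), (n.choose i : R) * x ^ (n - i) * f i

@[simp]
lemma binomialTransform_zero_left (f : ℕ → R) : binomialTransform 0 f = f := by
  ext n
  rw [binomialTransform, sum_eq_single_of_mem n (self_mem_range_succ n)]
  · simp
  · intro i hi hin
    have : 0 < n - i := by rw [mem_range] at hi; omega
    simp [zero_pow this.ne']

@[simp]
lemma binomialTransform_apply_zero (x : R) (f : ℕ → R) : binomialTransform x f 0 = f 0 := by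
  simp [binomialTransform]

lemma sum_choose_mul_choose_mul_pow (x y : R) (n i : ℕ) :
    ∑ v ∈ range (n + 1), ((n.choose v * v.choose i : ℕ) : R) * x ^ (n - v) * y ^ (v - i)
      = n.choose i * (x + y) ^ (n - i) := by
  rcases lt_or_ge n i with hni | hin
  · rw [Nat.choose_eq_zero_of_lt hni, Nat.cast_zero, zero_mul]
    exact sum_eq_zero fun v hv => by
      simp [Nat.choose_eq_zero_of_lt (n := v) (k := i) (by rw [mem_range] at hv; omega)]
  obtain ⟨k, rfl⟩ := Nat.exists_eq_add_of_le hin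
  rw [add_assoc, sum_range_add, sum_eq_zero (s := range i) fun v hv => by
      simp [Nat.choose_eq_zero_of_lt (mem_range.1 hv)],
    zero_add, Nat.add_sub_cancel_left, add_comm x y, add_pow, mul_sum]
  refine sum_congr rfl fun t _ => ?_
  rw [Nat.choose_mul (Nat.le_add_right i t), Nat.add_sub_cancel_left, Nat.add_sub_cancel_left,
    Nat.add_sub_add_left]
  push_cast
  ring

theorem binomialTransform_binomialTransform (x y : R) (f : ℕ → R) :
    binomialTransform x (binomialTransform y f) = binomialTransform (x + y) f := by
  ext n
  have hextend : ∀ v ∈ range (n + 1), ∑ i ∈ range (v + 1), (v.choose i : R) * y ^ (v - i) * f i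
      = ∑ i ∈ range (n + 1), (v.choose i : R) * y ^ (v - i) * f i := by
    intro v hv
    refine sum_subset (range_subset_range.2 (by rw [mem_range] at hv; omega)) fun i _ hi => ?_
    rw [Nat.choose_eq_zero_of_lt (by rw [mem_range] at hi; omega)]
    simp
  simp only [binomialTransform]
  rw [sum_congr rfl fun v hv => by rw [hextend v hv, mul_sum], sum_comm]
  refine sum_congr rfl fun i _ => ?_
  rw [← sum_choose_mul_choose_mul_pow, sum_mul]
  refine sum_congr rfl fun v _ => ?_
  push_cast
  ring

theorem one_sub_pow_mul_binomialTransform_one_eq (K : ℕ) (δ : R) (f : ℕ → R)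
    (hrec : ∀ n, 1 ≤ n → n < K → (1 - δ ^ (K - n)) * f n
      = δ ^ (K - n) * ∑ i ∈ range n, (n.choose i : R) * (1 - δ) ^ (n - i) * f i)
    (n : ℕ) (hn : n < K) :
    (1 - δ ^ (K - n)) * binomialTransform 1 f n = (1 - δ ^ K) * f 0 := by
  set S := binomialTransform 1 f
  set h : ℕ → R := fun v => (1 - δ ^ (K - v)) * S v with h_def
  have hdiff : ∀ n, 1 ≤ n → n < K → binomialTransform (-1) h n = 0 := by
    intro n hn hnK
    have hsplit : binomialTransform (-1) h n
        = binomialTransform (-1) S n - δ ^ (K - n) * binomialTransform (-δ) S n := by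
      simp only [binomialTransform, h_def, mul_sum, ← sum_sub_distrib]
      refine sum_congr rfl fun v hv => ?_
      rw [show K - v = (K - n) + (n - v) by rw [mem_range] at hv; omega, pow_add, neg_pow,
        neg_pow δ]
      ring
    rw [hsplit, binomialTransform_binomialTransform, binomialTransform_binomialTransform,
      neg_add_cancel, binomialTransform_zero_left, neg_add_eq_sub, binomialTransform,
      sum_range_succ]
    simp only [Nat.choose_self, Nat.cast_one, Nat.sub_self, pow_zero, one_mul]
    linear_combination hrec n hn hnK
  calc (1 - δ ^ (K - n)) * S n = h n := rfl
    _ = binomialTransform 1 (binomialTransform (-1) h) n := by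
      rw [binomialTransform_binomialTransform, add_neg_cancel, binomialTransform_zero_left]
    _ = binomialTransform (-1) h 0 := by
      rw [binomialTransform, sum_eq_single_of_mem 0 (by simp)]
      · simp
      · intro v hv hv0
        rw [hdiff v (Nat.pos_of_ne_zero hv0) (by rw [mem_range] at hv; omega), mul_zero]
    _ = (1 - δ ^ K) * f 0 := by simp [h_def, S]

end BinomialTransform

section Counting

variable {α M : Type*} [DecidableEq α] {J : Finset α} {a : α}

lemma sum_powerset_filter_mem_apply_card [AddCommMonoid M] (ha : a ∈ J) (F : ℕ → M) :
    ∑ I ∈ J.powerset with a ∈ I, F #I = ∑ i ∈ range #J, (#J - 1).choose i • F (i + 1) := by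
  have ha' : a ∉ J.erase a := notMem_erase a J
  calc ∑ I ∈ J.powerset with a ∈ I, F #I
      = ∑ I ∈ (insert a (J.erase a)).powerset, if a ∈ I then F #I else 0 := by
        rw [insert_erase ha, sum_filter]
    _ = ∑ t ∈ (J.erase a).powerset, F (#t + 1) := by
        rw [sum_powerset_insert ha', sum_eq_zero fun t ht =>
          if_neg fun hat => ha' (mem_powerset.1 ht hat), zero_add]
        exact sum_congr rfl fun t ht => by
          rw [if_pos (mem_insert_self a t),
            card_insert_of_notMem fun hat => ha' (mem_powerset.1 ht hat)]
    _ = ∑ i ∈ range #J, (#J - 1).choose i • F (i + 1) := by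
        rw [sum_powerset_apply_card (fun i => F (i + 1)), card_erase_of_mem ha,
          Nat.sub_add_cancel (card_pos.2 ⟨a, ha⟩)]

lemma sum_powerset_filter_mem_ne_apply_card [AddCommGroup M] (ha : a ∈ J) (F : ℕ → M) :
    ∑ I ∈ J.powerset with a ∈ I ∧ I ≠ J, F #I
      = ∑ i ∈ range (#J - 1), (#J - 1).choose i • F (i + 1) := by
  have hfilter : {I ∈ J.powerset | a ∈ I ∧ I ≠ J} = {I ∈ J.powerset | a ∈ I}.erase J := by
    ext I
    simp only [mem_erase, mem_filter]
    tauto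
  obtain ⟨n, hn⟩ : ∃ n, #J = n + 1 := Nat.exists_eq_add_one.2 (card_pos.2 ⟨a, ha⟩)
  rw [hfilter, sum_erase_eq_sub (mem_filter.2 ⟨mem_powerset_self J, ha⟩),
    sum_powerset_filter_mem_apply_card ha, hn, Nat.add_sub_cancel, sum_range_succ,
    Nat.choose_self, one_smul, add_sub_cancel_right]

end Counting

section MinRecursion

variable {α R : Type*} [LinearOrder α] [CommRing R] {μ : Finset α → R} {m : R}

lemma eq_sum_range_of_min_rec (c : ℕ → ℕ → R)
    (hrec : ∀ (J : Finset α) (hJ : 2 ≤ #J),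
      μ J = ∑ I ∈ J.powerset with J.min' (card_pos.mp (by omega)) ∈ I ∧ I ≠ J, c #J #I * μ I)
    {g : ℕ → R} {J : Finset α} (hJ : 2 ≤ #J) (hg : ∀ I ⊂ J, I.Nonempty → μ I = g #I) :
    μ J = ∑ i ∈ range (#J - 1), (#J - 1).choose i • (c #J (i + 1) * g (i + 1)) := by
  rw [hrec J hJ]
  trans ∑ I ∈ J.powerset with J.min' (card_pos.mp (by omega)) ∈ I ∧ I ≠ J, c #J #I * g #I
  · refine sum_congr rfl fun I hI => ?_
    obtain ⟨hIJ, hmin, hne⟩ := by simpa only [mem_filter, mem_powerset] using hI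
    rw [hg I (ssubset_of_subset_of_ne hIJ hne) ⟨_, hmin⟩]
  · exact sum_powerset_filter_mem_ne_apply_card (min'_mem J _) fun i => c #J i * g i

theorem exists_eq_comp_card_of_min_rec (c : ℕ → ℕ → R) (h1 : ∀ a, μ {a} = m)
    (hrec : ∀ (J : Finset α) (hJ : 2 ≤ #J),
      μ J = ∑ I ∈ J.powerset with J.min' (card_pos.mp (by omega)) ∈ I ∧ I ≠ J, c #J #I * μ I) :
    ∃ g : ℕ → R, ∀ J : Finset α, J.Nonempty → μ J = g #J := by
  have hbounded : ∀ N, ∃ g : ℕ → R, ∀ J : Finset α, J.Nonempty → #J ≤ N → μ J = g #J := by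
    intro N
    induction N with
    | zero => exact ⟨0, fun J hJ hJ0 => absurd hJ0 (card_pos.2 hJ).not_ge⟩
    | succ N ih =>
      obtain ⟨g, hg⟩ := ih
      refine ⟨Function.update g (N + 1) (if N = 0 then m
        else ∑ i ∈ range N, N.choose i • (c (N + 1) (i + 1) * g (i + 1))), fun J hJ hJN => ?_⟩
      rcases hJN.lt_or_eq with hlt | heq
      · rw [Function.update_of_ne hlt.ne, hg J hJ (Nat.lt_succ_iff.1 hlt)]
      rw [heq, Function.update_self]
      split_ifs with hN
      · obtain ⟨a, rfl⟩ := card_eq_one.1 (heq.trans (by rw [hN]))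
        exact h1 a
      · rw [eq_sum_range_of_min_rec c hrec (by omega) fun I hIJ hI =>
          hg I hI (by have := card_lt_card hIJ; omega), heq, Nat.add_sub_cancel]
  choose G hG using hbounded
  exact ⟨fun n => G n n, fun J hJ => hG #J J hJ le_rfl⟩

end MinRecursion

/-- Recursion lemma specialized to the spatially i.i.d. symmetric erasure BC
(`δ_A = δ^{|A|}`, `φ_{F,T} = δ^{|F|}(1-δ)^{|T|}`): if `μ_{{k}} = m` and
`μ_J = Σ_{k*∈I⊊J} [δ^{K-j+1}(1-δ)^{j-|I|}/(1-δ^{K-j+1})] μ_I` for `|J| = j ≥ 2`,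
then `Σ_{k∈I⊆W} μ_I = (1-δ^K) m / (1-δ^{K-|W|+1})` for all `k ∈ W ⊆ {k,…,K}`. -/
theorem stmt19 (K : ℕ) (δ : ℝ) (hδ0 : 0 ≤ δ) (hδ1 : δ < 1)
    (m : ℝ) (μ : Finset (Fin K) → ℝ)
    (hμ1 : ∀ k : Fin K, μ {k} = m)
    (hμrec : ∀ (J : Finset (Fin K)) (hJ : 2 ≤ J.card),
      μ J = ∑ I ∈ J.powerset.filter
          (fun I => J.min' (Finset.card_pos.mp (by omega)) ∈ I ∧ I ≠ J),
        δ ^ (K - J.card + 1) * (1 - δ) ^ (J.card - I.card) /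
          (1 - δ ^ (K - J.card + 1)) * μ I) :
    ∀ (k : Fin K) (W : Finset (Fin K)), k ∈ W → (∀ i ∈ W, k ≤ i) →
      ∑ I ∈ W.powerset.filter (fun I => k ∈ I), μ I
        = (1 - δ ^ K) * m / (1 - δ ^ (K - W.card + 1)) := by
  intro k W hkW _
  have hδpow : ∀ n, n ≠ 0 → 1 - δ ^ n ≠ 0 := fun n hn => (sub_pos.2 (pow_lt_one₀ hδ0 hδ1 hn)).ne'
  let c : ℕ → ℕ → ℝ := fun j i => δ ^ (K - j + 1) * (1 - δ) ^ (j - i) / (1 - δ ^ (K - j + 1))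
  obtain ⟨g, hg⟩ := exists_eq_comp_card_of_min_rec c hμ1 hμrec
  have hrec : ∀ n, 1 ≤ n → n < K → (1 - δ ^ (K - n)) * g (n + 1)
      = δ ^ (K - n) * ∑ i ∈ range n, (n.choose i : ℝ) * (1 - δ) ^ (n - i) * g (i + 1) := by
    intro n hn hnK
    obtain ⟨J, -, hJ⟩ := exists_subset_card_eq (s := (univ : Finset (Fin K))) (n := n + 1)
      (by rw [card_univ, Fintype.card_fin]; omega)
    have hJrec := eq_sum_range_of_min_rec c hμrec (J := J) (by omega) fun I _ hI => hg I hI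
    rw [hg J (by rw [← card_pos, hJ]; omega), hJ, Nat.add_sub_cancel] at hJrec
    rw [hJrec, mul_sum, mul_sum]
    refine sum_congr rfl fun i _ => ?_
    rw [nsmul_eq_mul]
    simp only [c, show n + 1 - (i + 1) = n - i by omega, show K - (n + 1) + 1 = K - n by omega]
    field_simp [hδpow (K - n) (by omega)]
  have hW : 1 ≤ #W ∧ #W ≤ K := ⟨card_pos.2 ⟨k, hkW⟩, by simpa using card_le_univ W⟩
  have key := one_sub_pow_mul_binomialTransform_one_eq K δ (fun i => g (i + 1)) hrec (#W - 1)
    (by omega)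
  rw [sum_congr rfl fun I hI => hg I ⟨k, (mem_filter.1 hI).2⟩,
    sum_powerset_filter_mem_apply_card hkW, show K - #W + 1 = K - (#W - 1) by omega,
    eq_div_iff (hδpow (K - (#W - 1)) (by omega)), ← hμ1 k, hg {k} (singleton_nonempty k),
    card_singleton, mul_comm, ← key, binomialTransform, Nat.sub_add_cancel hW.1]
  simp [nsmul_eq_mul]
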